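/- arXiv:1708.03264 — 5 statements merged into one kernel-verified Lean document; each statement's English description precedes it below -/
import Mathlib

section
/- There is no function T : Fin 8 → Bool × Bool × Bool × Bool (an 8-row table with columns A, B, A', B' and no missing data) whose marginal counts equal the Bell family: the (A,B)-marginal has counts m_AB(0,0)=4, m_AB(1,1)=4, m_AB(0,1)=m_AB(1,0)=0; the (A',B)-marginal has m_{A'B}(0,0)=3, m_{A'B}(0,1)=1, m_{A'B}(1,0)=1, m_{A'B}(1,1)=3; the (A,B')-marginal has m_{AB'}(0,0)=3, m_{AB'}(0,1)=1, m_{AB'}(1,0)=1, m_{AB'}(1,1)=3; and the (A',B')-marginal has m_{A'B'}(0,0)=1, m_{A'B'}(0,1)=3, m_{A'B'}(1,0)=3, m_{A'B'}(1,1)=1. -/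
/-- Marginal count of a pair of Bool-valued columns of an 8-row table. -/
def marg (T : Fin 8 → Bool × Bool × Bool × Bool)
    (f g : Bool × Bool × Bool × Bool → Bool) (x y : Bool) : ℕ :=
  (Finset.univ.filter (fun i => f (T i) = x ∧ g (T i) = y)).card

/-!
CHSH counting: in each row the events `A = B`, `A' = B`, `A = B'` and `A' ≠ B'` cannot all
hold, since the first three force `A' = B'`. Hence each of the 8 rows satisfies at most 3 of
them, so the four event counts sum to at most 24; but the Bell marginals make them
`8 + 6 + 6 + 6 = 26`.
-/

open Finset

theorem card_filter_add_le_of_not_all {ι : Type*} [Fintype ι] (p q r s : ι → Prop)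
    [DecidablePred p] [DecidablePred q] [DecidablePred r] [DecidablePred s]
    (h : ∀ i, ¬ (p i ∧ q i ∧ r i ∧ s i)) :
    #{i | p i} + #{i | q i} + #{i | r i} + #{i | s i} ≤ 3 * Fintype.card ι := by
  simp only [card_filter, ← sum_add_distrib]
  refine (sum_le_sum (g := fun _ => 3) fun i _ => ?_).trans (by simp [mul_comm])
  have := h i
  split_ifs <;> simp_all

theorem chsh_events_not_all {α : Type*} (a b a' b' : α) :
    ¬ (a = b ∧ a' = b ∧ a = b' ∧ a' ≠ b') := by
  rintro ⟨rfl, rfl, rfl, h⟩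
  exact h rfl

section Marginals

variable (T : Fin 8 → Bool × Bool × Bool × Bool) (f g : Bool × Bool × Bool × Bool → Bool)

theorem marg_false_false_add_marg_true_true :
    marg T f g false false + marg T f g true true = #{i | f (T i) = g (T i)} := by
  rw [marg, marg, ← card_union_of_disjoint (disjoint_filter.2 fun i _ h h' => by simp_all)]
  congr 1
  ext i
  simp only [mem_union, mem_filter, mem_univ, true_and]
  cases f (T i) <;> cases g (T i) <;> decide

theorem marg_false_true_add_marg_true_false :
    marg T f g false true + marg T f g true false = #{i | f (T i) ≠ g (T i)} := by
  rw [marg, marg, ← card_union_of_disjoint (disjoint_filter.2 fun i _ h h' => by simp_all)]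
  congr 1
  ext i
  simp only [mem_union, mem_filter, mem_univ, true_and]
  cases f (T i) <;> cases g (T i) <;> decide

end Marginals

theorem no_complete_table_with_bell_marginals :
    ¬ ∃ T : Fin 8 → Bool × Bool × Bool × Bool,
      -- (A,B) marginal
      (marg T (fun r => r.1) (fun r => r.2.1) false false = 4 ∧
       marg T (fun r => r.1) (fun r => r.2.1) false true = 0 ∧
       marg T (fun r => r.1) (fun r => r.2.1) true false = 0 ∧
       marg T (fun r => r.1) (fun r => r.2.1) true true = 4) ∧
      -- (A',B) marginal
      (marg T (fun r => r.2.2.1) (fun r => r.2.1) false false = 3 ∧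
       marg T (fun r => r.2.2.1) (fun r => r.2.1) false true = 1 ∧
       marg T (fun r => r.2.2.1) (fun r => r.2.1) true false = 1 ∧
       marg T (fun r => r.2.2.1) (fun r => r.2.1) true true = 3) ∧
      -- (A,B') marginal
      (marg T (fun r => r.1) (fun r => r.2.2.2) false false = 3 ∧
       marg T (fun r => r.1) (fun r => r.2.2.2) false true = 1 ∧
       marg T (fun r => r.1) (fun r => r.2.2.2) true false = 1 ∧
       marg T (fun r => r.1) (fun r => r.2.2.2) true true = 3) ∧
      -- (A',B') marginal
      (marg T (fun r => r.2.2.1) (fun r => r.2.2.2) false false = 1 ∧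
       marg T (fun r => r.2.2.1) (fun r => r.2.2.2) false true = 3 ∧
       marg T (fun r => r.2.2.1) (fun r => r.2.2.2) true false = 3 ∧
       marg T (fun r => r.2.2.1) (fun r => r.2.2.2) true true = 1) := by
  rintro ⟨T, ⟨hAB₀₀, -, -, hAB₁₁⟩, ⟨hA'B₀₀, -, -, hA'B₁₁⟩, ⟨hAB'₀₀, -, -, hAB'₁₁⟩,
    ⟨-, hA'B'₀₁, hA'B'₁₀, -⟩⟩
  have hAB := marg_false_false_add_marg_true_true T (fun r => r.1) (fun r => r.2.1)
  have hA'B := marg_false_false_add_marg_true_true T (fun r => r.2.2.1) (fun r => r.2.1)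
  have hAB' := marg_false_false_add_marg_true_true T (fun r => r.1) (fun r => r.2.2.2)
  have hA'B' := marg_false_true_add_marg_true_false T (fun r => r.2.2.1) (fun r => r.2.2.2)
  have hCHSH := card_filter_add_le_of_not_all _ _ _ _
    fun i => chsh_events_not_all (T i).1 (T i).2.1 (T i).2.2.1 (T i).2.2.2
  simp only [Fintype.card_fin] at hCHSH
  omega
end

section
/- For any probability distribution p on Bool^4 (a joint distribution of four ±1-valued or Boolean random variables A, B, A', B'), the CHSH quantity E(A,B) + E(A,B') + E(A',B) − E(A',B') lies in the interval [−2, 2], where E(X,Y) denotes the expectation of the product of the ±1-valued versions of X and Y. -/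
/-!
Each outcome `σ` assigns definite values `a, b, a', b' ∈ [-1, 1]`, and the CHSH combination
`a b + a b' + a' b - a' b' = a (b + b') + a' (b - b')` is bounded in absolute value by
`|b + b'| + |b - b'| ≤ 2`. The combination of correlations is the average of this quantity
against `p`, so it stays in `[-2, 2]`.
-/

/-- The ±1 value of a Boolean. -/
def sgn (b : Bool) : ℝ := if b then 1 else -1

/-- Correlation of two Bool-valued coordinates under a pmf on `Bool^4`. -/
def corr (p : Bool × Bool × Bool × Bool → ℝ)
    (f g : Bool × Bool × Bool × Bool → Bool) : ℝ :=
  ∑ σ : Bool × Bool × Bool × Bool, p σ * sgn (f σ) * sgn (g σ)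

lemma abs_sgn_eq_one (b : Bool) : |sgn b| = 1 := by
  cases b <;> norm_num [sgn]

lemma abs_add_add_abs_sub_le {b b' : ℝ} (hb : |b| ≤ 1) (hb' : |b'| ≤ 1) :
    |b + b'| + |b - b'| ≤ 2 := by
  rw [abs_le] at hb hb'
  rcases abs_cases (b + b') with ⟨h1, -⟩ | ⟨h1, -⟩ <;>
    rcases abs_cases (b - b') with ⟨h2, -⟩ | ⟨h2, -⟩ <;> linarith

lemma abs_chsh_le_two {a b a' b' : ℝ} (ha : |a| ≤ 1) (hb : |b| ≤ 1) (ha' : |a'| ≤ 1)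
    (hb' : |b'| ≤ 1) : |a * b + a * b' + a' * b - a' * b'| ≤ 2 :=
  calc |a * b + a * b' + a' * b - a' * b'| = |a * (b + b') + a' * (b - b')| := by ring_nf
    _ ≤ |a| * |b + b'| + |a'| * |b - b'| := by
        simpa only [abs_mul] using abs_add_le (a * (b + b')) (a' * (b - b'))
    _ ≤ |b + b'| + |b - b'| := by gcongr <;> exact mul_le_of_le_one_left (abs_nonneg _) ‹_›
    _ ≤ 2 := abs_add_add_abs_sub_le hb hb'

lemma abs_sum_mul_le_of_abs_le {ι : Type*} [Fintype ι] {p f : ι → ℝ} {c : ℝ}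
    (hp : ∀ i, 0 ≤ p i) (hsum : ∑ i, p i = 1) (hf : ∀ i, |f i| ≤ c) :
    |∑ i, p i * f i| ≤ c :=
  calc |∑ i, p i * f i| ≤ ∑ i, p i * |f i| := by
        simpa only [abs_mul, abs_of_nonneg (hp _)] using Finset.abs_sum_le_sum_abs (fun i => p i * f i) Finset.univ
    _ ≤ ∑ i, p i * c := by gcongr with i; exacts [hp i, hf i]
    _ = c := by rw [← Finset.sum_mul, hsum, one_mul]

theorem chsh_inequality (p : Bool × Bool × Bool × Bool → ℝ)
    (hnn : ∀ σ, 0 ≤ p σ) (hsum : ∑ σ : Bool × Bool × Bool × Bool, p σ = 1) :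
    -2 ≤ corr p (fun r => r.1) (fun r => r.2.1)
        + corr p (fun r => r.1) (fun r => r.2.2.2)
        + corr p (fun r => r.2.2.1) (fun r => r.2.1)
        - corr p (fun r => r.2.2.1) (fun r => r.2.2.2) ∧
      corr p (fun r => r.1) (fun r => r.2.1)
        + corr p (fun r => r.1) (fun r => r.2.2.2)
        + corr p (fun r => r.2.2.1) (fun r => r.2.1)
        - corr p (fun r => r.2.2.1) (fun r => r.2.2.2) ≤ 2 := by
  rw [← abs_le]
  have hσ : ∀ σ : Bool × Bool × Bool × Bool,
      |sgn σ.1 * sgn σ.2.1 + sgn σ.1 * sgn σ.2.2.2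
        + sgn σ.2.2.1 * sgn σ.2.1 - sgn σ.2.2.1 * sgn σ.2.2.2| ≤ 2 := fun σ =>
    abs_chsh_le_two (abs_sgn_eq_one _).le (abs_sgn_eq_one _).le (abs_sgn_eq_one _).le
      (abs_sgn_eq_one _).le
  refine le_of_eq_of_le ?_ (abs_sum_mul_le_of_abs_le hnn hsum hσ)
  congr 1
  unfold corr
  rw [← Finset.sum_add_distrib, ← Finset.sum_add_distrib,
    ← Finset.sum_sub_distrib]
  exact Finset.sum_congr rfl fun σ _ => by ring
end

section
/- There exists a 16-row table with missing data, T : Fin 16 → (Option Bool)^4 with columns A, B, A', B', such that available-case analysis (counting only rows where both relevant columns are non-missing) yields exactly the Bell marginal tables: the (A,B)-counts are [[4,0],[0,4]], the (A',B)-counts are [[3,1],[1,3]], the (A,B')-counts are [[3,1],[1,3]], and the (A',B')-counts are [[1,3],[3,1]]. -/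
/-- Available-case marginal count of two `Option Bool` columns of a 16-row table. -/
def acount (T : Fin 16 → Option Bool × Option Bool × Option Bool × Option Bool)
    (f g : Option Bool × Option Bool × Option Bool × Option Bool → Option Bool)
    (x y : Bool) : ℕ :=
  (Finset.univ.filter (fun i => f (T i) = some x ∧ g (T i) = some y)).card

/- Table 2 of the paper, columns (A, B, A', B'): four blocks of four rows, each block missing one
column, so every pair of columns is observed together in exactly two blocks. The blocks missing B'
and A' have A = B = A' resp. A = B = B', giving the perfect correlation of (A, B); the blocks missing
A and B run through all values of (A', B) resp. (A, B'), giving the 3:1 correlations; in them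
A' ≠ B' resp. A' = A, giving the 1:3 anticorrelation of (A', B'). -/
def bellTable : Fin 16 → Option Bool × Option Bool × Option Bool × Option Bool :=
  ![(some false, some false, some false, none),
    (some false, some false, some false, none),
    (some true,  some true,  some true,  none),
    (some true,  some true,  some true,  none),
    (some false, some false, none, some false),
    (some false, some false, none, some false),
    (some true,  some true,  none, some true),
    (some true,  some true,  none, some true),
    (none, some false, some false, some true),
    (none, some true,  some false, some true),
    (none, some false, some true,  some false),
    (none, some true,  some true,  some false),
    (some false, none, some false, some false),
    (some false, none, some false, some true),
    (some true,  none, some true,  some false),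
    (some true,  none, some true,  some true)]

theorem acount_bellTable_A_B :
    acount bellTable (fun r => r.1) (fun r => r.2.1) false false = 4 ∧
    acount bellTable (fun r => r.1) (fun r => r.2.1) false true = 0 ∧
    acount bellTable (fun r => r.1) (fun r => r.2.1) true false = 0 ∧
    acount bellTable (fun r => r.1) (fun r => r.2.1) true true = 4 := by
  decide

theorem acount_bellTable_A'_B :
    acount bellTable (fun r => r.2.2.1) (fun r => r.2.1) false false = 3 ∧
    acount bellTable (fun r => r.2.2.1) (fun r => r.2.1) false true = 1 ∧
    acount bellTable (fun r => r.2.2.1) (fun r => r.2.1) true false = 1 ∧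
    acount bellTable (fun r => r.2.2.1) (fun r => r.2.1) true true = 3 := by
  decide

theorem acount_bellTable_A_B' :
    acount bellTable (fun r => r.1) (fun r => r.2.2.2) false false = 3 ∧
    acount bellTable (fun r => r.1) (fun r => r.2.2.2) false true = 1 ∧
    acount bellTable (fun r => r.1) (fun r => r.2.2.2) true false = 1 ∧
    acount bellTable (fun r => r.1) (fun r => r.2.2.2) true true = 3 := by
  decide

theorem acount_bellTable_A'_B' :
    acount bellTable (fun r => r.2.2.1) (fun r => r.2.2.2) false false = 1 ∧
    acount bellTable (fun r => r.2.2.1) (fun r => r.2.2.2) false true = 3 ∧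
    acount bellTable (fun r => r.2.2.1) (fun r => r.2.2.2) true false = 3 ∧
    acount bellTable (fun r => r.2.2.1) (fun r => r.2.2.2) true true = 1 := by
  decide

theorem missing_data_table_with_bell_marginals :
    ∃ T : Fin 16 → Option Bool × Option Bool × Option Bool × Option Bool,
      -- (A,B) available-case counts
      (acount T (fun r => r.1) (fun r => r.2.1) false false = 4 ∧
       acount T (fun r => r.1) (fun r => r.2.1) false true = 0 ∧
       acount T (fun r => r.1) (fun r => r.2.1) true false = 0 ∧
       acount T (fun r => r.1) (fun r => r.2.1) true true = 4) ∧
      -- (A',B) available-case counts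
      (acount T (fun r => r.2.2.1) (fun r => r.2.1) false false = 3 ∧
       acount T (fun r => r.2.2.1) (fun r => r.2.1) false true = 1 ∧
       acount T (fun r => r.2.2.1) (fun r => r.2.1) true false = 1 ∧
       acount T (fun r => r.2.2.1) (fun r => r.2.1) true true = 3) ∧
      -- (A,B') available-case counts
      (acount T (fun r => r.1) (fun r => r.2.2.2) false false = 3 ∧
       acount T (fun r => r.1) (fun r => r.2.2.2) false true = 1 ∧
       acount T (fun r => r.1) (fun r => r.2.2.2) true false = 1 ∧
       acount T (fun r => r.1) (fun r => r.2.2.2) true true = 3) ∧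
      -- (A',B') available-case counts
      (acount T (fun r => r.2.2.1) (fun r => r.2.2.2) false false = 1 ∧
       acount T (fun r => r.2.2.1) (fun r => r.2.2.2) false true = 3 ∧
       acount T (fun r => r.2.2.1) (fun r => r.2.2.2) true false = 3 ∧
       acount T (fun r => r.2.2.1) (fun r => r.2.2.2) true true = 1) :=
  ⟨bellTable, acount_bellTable_A_B, acount_bellTable_A'_B, acount_bellTable_A_B',
    acount_bellTable_A'_B'⟩
end

section
/- The Bell family of count relations has no nonnegative-integer global section: there is no function N : Bool^4 → ℕ whose four pairwise marginals over the contexts (A,B), (A',B), (A,B'), (A',B') equal respectively [[4,0],[0,4]], [[3,1],[1,3]], [[3,1],[1,3]], [[1,3],[3,1]]. -/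
/-!
Only the disagreement counts `#{σ | X σ ≠ Y σ}` (weighted by `N`) of the four contexts matter.
They satisfy the triangle inequality, so `d(A', B') ≤ d(A', B) + d(A, B) + d(A, B')`, the
counting form of the CHSH inequality. The Bell family has disagreement counts
`d(A, B) = 0`, `d(A', B) = d(A, B') = 2` and `d(A', B') = 6 > 4`.
-/

/-- The (X,Y)-marginal of a count relation `N : Bool^4 → ℕ`. -/
def nmarg (N : Bool × Bool × Bool × Bool → ℕ)
    (f g : Bool × Bool × Bool × Bool → Bool) (x y : Bool) : ℕ :=
  ∑ σ ∈ Finset.univ.filter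
      (fun σ : Bool × Bool × Bool × Bool => f σ = x ∧ g σ = y), N σ

open Finset

section Disagreement

variable {α β M : Type*} [Fintype α] [DecidableEq β] [AddCommMonoid M]

def disagreement (N : α → M) (f g : α → β) : M :=
  ∑ a ∈ univ.filter (fun a => f a ≠ g a), N a

theorem disagreement_comm (N : α → M) (f g : α → β) :
    disagreement N f g = disagreement N g f := by
  simp only [disagreement, ne_comm]

variable [PartialOrder M] [CanonicallyOrderedAdd M] [IsOrderedAddMonoid M]

theorem disagreement_triangle (N : α → M) (f g h : α → β) :
    disagreement N f h ≤ disagreement N f g + disagreement N g h := by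
  simp only [disagreement, sum_filter, ← sum_add_distrib]
  gcongr with a
  split_ifs <;> simp_all

theorem disagreement_le_chsh (N : α → M) (a a' b b' : α → β) :
    disagreement N a' b' ≤ disagreement N a' b + disagreement N a b + disagreement N a b' :=
  calc disagreement N a' b'
      ≤ disagreement N a' b + disagreement N b b' := disagreement_triangle N a' b b'
    _ ≤ disagreement N a' b + (disagreement N b a + disagreement N a b') := by
        gcongr; exact disagreement_triangle N b a b'
    _ = disagreement N a' b + disagreement N a b + disagreement N a b' := by
        rw [disagreement_comm N b a, add_assoc]

end Disagreement

theorem nmarg_false_true_add_nmarg_true_false (N : Bool × Bool × Bool × Bool → ℕ)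
    (f g : Bool × Bool × Bool × Bool → Bool) :
    nmarg N f g false true + nmarg N f g true false = disagreement N f g := by
  simp only [nmarg, disagreement, sum_filter, ← sum_add_distrib]
  refine sum_congr rfl fun σ _ => ?_
  cases f σ <;> cases g σ <;> simp

theorem bell_family_no_global_section :
    ¬ ∃ N : Bool × Bool × Bool × Bool → ℕ,
      (nmarg N (fun σ => σ.1) (fun σ => σ.2.1) false false = 4 ∧
       nmarg N (fun σ => σ.1) (fun σ => σ.2.1) false true = 0 ∧
       nmarg N (fun σ => σ.1) (fun σ => σ.2.1) true false = 0 ∧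
       nmarg N (fun σ => σ.1) (fun σ => σ.2.1) true true = 4) ∧
      (nmarg N (fun σ => σ.2.2.1) (fun σ => σ.2.1) false false = 3 ∧
       nmarg N (fun σ => σ.2.2.1) (fun σ => σ.2.1) false true = 1 ∧
       nmarg N (fun σ => σ.2.2.1) (fun σ => σ.2.1) true false = 1 ∧
       nmarg N (fun σ => σ.2.2.1) (fun σ => σ.2.1) true true = 3) ∧
      (nmarg N (fun σ => σ.1) (fun σ => σ.2.2.2) false false = 3 ∧
       nmarg N (fun σ => σ.1) (fun σ => σ.2.2.2) false true = 1 ∧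
       nmarg N (fun σ => σ.1) (fun σ => σ.2.2.2) true false = 1 ∧
       nmarg N (fun σ => σ.1) (fun σ => σ.2.2.2) true true = 3) ∧
      (nmarg N (fun σ => σ.2.2.1) (fun σ => σ.2.2.2) false false = 1 ∧
       nmarg N (fun σ => σ.2.2.1) (fun σ => σ.2.2.2) false true = 3 ∧
       nmarg N (fun σ => σ.2.2.1) (fun σ => σ.2.2.2) true false = 3 ∧
       nmarg N (fun σ => σ.2.2.1) (fun σ => σ.2.2.2) true true = 1) := by
  rintro ⟨N, ⟨-, hAB01, hAB10, -⟩, ⟨-, hA'B01, hA'B10, -⟩, ⟨-, hAB'01, hAB'10, -⟩,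
    ⟨-, hA'B'01, hA'B'10, -⟩⟩
  have chsh := disagreement_le_chsh N (fun σ => σ.1) (fun σ => σ.2.2.1) (fun σ => σ.2.1)
    (fun σ => σ.2.2.2)
  simp only [← nmarg_false_true_add_nmarg_true_false] at chsh
  omega
end

section
/- The Bell family admits a signed global section: there exists a function N : Bool^4 → ℤ (allowing negative values) whose pairwise marginals over the contexts (A,B), (A',B), (A,B'), (A',B') equal respectively [[4,0],[0,4]], [[3,1],[1,3]], [[3,1],[1,3]], [[1,3],[3,1]]. -/
/-- The (X,Y)-marginal of a `ℤ`-valued relation `N : Bool^4 → ℤ`. -/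
def zmarg (N : Bool × Bool × Bool × Bool → ℤ)
    (f g : Bool × Bool × Bool × Bool → Bool) (x y : Bool) : ℤ :=
  ∑ σ ∈ Finset.univ.filter
      (fun σ : Bool × Bool × Bool × Bool => f σ = x ∧ g σ = y), N σ

def bellSignedSection : Bool × Bool × Bool × Bool → ℤ
  | (false, false, false, false) => 3
  | (false, false, true, true) => 1
  | (false, true, false, false) => -3
  | (false, true, true, false) => 3
  | (true, false, false, false) => -3
  | (true, false, false, true) => 3
  | (true, true, false, false) => 4
  | _ => 0

theorem bell_family_has_signed_global_section :
    ∃ N : Bool × Bool × Bool × Bool → ℤ,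
      (zmarg N (fun σ => σ.1) (fun σ => σ.2.1) false false = 4 ∧
       zmarg N (fun σ => σ.1) (fun σ => σ.2.1) false true = 0 ∧
       zmarg N (fun σ => σ.1) (fun σ => σ.2.1) true false = 0 ∧
       zmarg N (fun σ => σ.1) (fun σ => σ.2.1) true true = 4) ∧
      (zmarg N (fun σ => σ.2.2.1) (fun σ => σ.2.1) false false = 3 ∧
       zmarg N (fun σ => σ.2.2.1) (fun σ => σ.2.1) false true = 1 ∧
       zmarg N (fun σ => σ.2.2.1) (fun σ => σ.2.1) true false = 1 ∧
       zmarg N (fun σ => σ.2.2.1) (fun σ => σ.2.1) true true = 3) ∧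
      (zmarg N (fun σ => σ.1) (fun σ => σ.2.2.2) false false = 3 ∧
       zmarg N (fun σ => σ.1) (fun σ => σ.2.2.2) false true = 1 ∧
       zmarg N (fun σ => σ.1) (fun σ => σ.2.2.2) true false = 1 ∧
       zmarg N (fun σ => σ.1) (fun σ => σ.2.2.2) true true = 3) ∧
      (zmarg N (fun σ => σ.2.2.1) (fun σ => σ.2.2.2) false false = 1 ∧
       zmarg N (fun σ => σ.2.2.1) (fun σ => σ.2.2.2) false true = 3 ∧
       zmarg N (fun σ => σ.2.2.1) (fun σ => σ.2.2.2) true false = 3 ∧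
       zmarg N (fun σ => σ.2.2.1) (fun σ => σ.2.2.2) true true = 1) := by
  exact ⟨bellSignedSection, by decide⟩
end
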